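/- Let w : ℝ⁴ → ℝ be smooth and satisfy the general heavenly equation (λ₂-λ₄)(λ₁-λ₃)w₁₃w₂₄ - (λ₃-λ₄)(λ₁-λ₂)w₁₂w₃₄ - (λ₂-λ₃)(λ₁-λ₄)w₁₄w₂₃ = 0 with λ₁,λ₂,λ₃,λ₄ pairwise distinct reals. Then u = w₁, v = w₂ satisfies the second equation of the two-component system: (λ₃-λ₄)(λ₁-λ₂)v₁u₂v₃₄ + (λ₂-λ₃)(λ₁-λ₄)(v₁u₄v₂₃ - v₃u₄v₁₂ + v₃u₂v₁₄) - (λ₂-λ₄)(λ₁-λ₃)(v₁u₃v₂₄ - v₄u₃v₁₂ + v₄u₂v₁₃) = 0. -/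

import Mathlib

/-- Partial derivative of `f : ℝ⁴ → ℝ` in the `i`-th coordinate direction. -/
noncomputable def pd (i : Fin 4) (f : (Fin 4 → ℝ) → ℝ) (x : Fin 4 → ℝ) : ℝ :=
  fderiv ℝ f x (Pi.single i 1)

lemma pd_contDiff (i : Fin 4) {f : (Fin 4 → ℝ) → ℝ} (hf : ContDiff ℝ (⊤ : ℕ∞) f) :
    ContDiff ℝ (⊤ : ℕ∞) (pd i f) := by
  unfold pd
  exact (hf.fderiv_right (by simp)).clm_apply contDiff_const

lemma pd_comm {f : (Fin 4 → ℝ) → ℝ} (hf : ContDiff ℝ (⊤ : ℕ∞) f) (i j : Fin 4) (x : Fin 4 → ℝ) :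
    pd i (pd j f) x = pd j (pd i f) x := by
  have hf' : Differentiable ℝ f := hf.differentiable (by simp)
  have h2 : ∀ y, HasFDerivAt f (fderiv ℝ f y) y := fun y => (hf' y).hasFDerivAt
  have hff : DifferentiableAt ℝ (fderiv ℝ f) x :=
    ((hf.fderiv_right (m := 1) (by exact WithTop.coe_le_coe.mpr le_top)).differentiable (by simp)) x
  have hsymm := second_derivative_symmetric h2 hff.hasFDerivAt (Pi.single i 1) (Pi.single j 1)
  unfold pd
  rw [fderiv_clm_apply hff (differentiableAt_const _),
      fderiv_clm_apply hff (differentiableAt_const _)]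
  simpa using hsymm

lemma pd_mul {f g : (Fin 4 → ℝ) → ℝ} (hf : Differentiable ℝ f) (hg : Differentiable ℝ g)
    (i : Fin 4) (x : Fin 4 → ℝ) :
    pd i (fun y => f y * g y) x = pd i f x * g x + f x * pd i g x := by
  unfold pd
  rw [fderiv_fun_mul (hf x) (hg x)]
  simp only [ContinuousLinearMap.add_apply, ContinuousLinearMap.smul_apply, smul_eq_mul]
  ring

lemma pd_sub {f g : (Fin 4 → ℝ) → ℝ} (hf : DifferentiableAt ℝ f x) (hg : DifferentiableAt ℝ g x)
    (i : Fin 4) :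
    pd i (fun y => f y - g y) x = pd i f x - pd i g x := by
  unfold pd
  rw [fderiv_fun_sub hf hg]; simp

lemma pd_const_mul {g : (Fin 4 → ℝ) → ℝ} (hg : DifferentiableAt ℝ g x) (c : ℝ) (i : Fin 4) :
    pd i (fun y => c * g y) x = c * pd i g x := by
  unfold pd
  rw [fderiv_const_mul hg]; simp

theorem stmt1 (l1 l2 l3 l4 : ℝ)
    (hd : l1 ≠ l2 ∧ l1 ≠ l3 ∧ l1 ≠ l4 ∧ l2 ≠ l3 ∧ l2 ≠ l4 ∧ l3 ≠ l4)
    (w : (Fin 4 → ℝ) → ℝ) (hw : ContDiff ℝ (⊤ : ℕ∞) w)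
    (heav : ∀ x, (l2 - l4) * (l1 - l3) * pd 0 (pd 2 w) x * pd 1 (pd 3 w) x
      - (l3 - l4) * (l1 - l2) * pd 0 (pd 1 w) x * pd 2 (pd 3 w) x
      - (l2 - l3) * (l1 - l4) * pd 0 (pd 3 w) x * pd 1 (pd 2 w) x = 0)
    (u v : (Fin 4 → ℝ) → ℝ) (hu : u = pd 0 w) (hv : v = pd 1 w) :
    ∀ x,
      (l3 - l4) * (l1 - l2) * (pd 0 v x * pd 1 u x * pd 2 (pd 3 v) x)
      + (l2 - l3) * (l1 - l4) * (pd 0 v x * pd 3 u x * pd 1 (pd 2 v) x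
          - pd 2 v x * pd 3 u x * pd 0 (pd 1 v) x
          + pd 2 v x * pd 1 u x * pd 0 (pd 3 v) x)
      - (l2 - l4) * (l1 - l3) * (pd 0 v x * pd 2 u x * pd 1 (pd 3 v) x
          - pd 3 v x * pd 2 u x * pd 0 (pd 1 v) x
          + pd 3 v x * pd 1 u x * pd 0 (pd 2 v) x) = 0 := by
  subst hu hv
  -- differentiability of second derivatives
  have hw2 : ∀ i j : Fin 4, ContDiff ℝ (⊤ : ℕ∞) (pd i (pd j w)) :=
    fun i j => pd_contDiff i (pd_contDiff j hw)
  have hd2 : ∀ i j : Fin 4, Differentiable ℝ (pd i (pd j w)) :=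
    fun i j => (hw2 i j).differentiable (by simp)
  intro x
  set c1 := (l2 - l4) * (l1 - l3) with hc1
  set c2 := (l3 - l4) * (l1 - l2) with hc2
  set c3 := (l2 - l3) * (l1 - l4) with hc3
  -- derivative of the heavenly equation in direction 1
  have key : c1 * (pd 1 (pd 0 (pd 2 w)) x * pd 1 (pd 3 w) x
        + pd 0 (pd 2 w) x * pd 1 (pd 1 (pd 3 w)) x)
      - c2 * (pd 1 (pd 0 (pd 1 w)) x * pd 2 (pd 3 w) x
        + pd 0 (pd 1 w) x * pd 1 (pd 2 (pd 3 w)) x)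
      - c3 * (pd 1 (pd 0 (pd 3 w)) x * pd 1 (pd 2 w) x
        + pd 0 (pd 3 w) x * pd 1 (pd 1 (pd 2 w)) x) = 0 := by
    have hzero : (fun y => (fun y => c1 * (pd 0 (pd 2 w) y * pd 1 (pd 3 w) y)
          - c2 * (pd 0 (pd 1 w) y * pd 2 (pd 3 w) y)) y
          - (fun y => c3 * (pd 0 (pd 3 w) y * pd 1 (pd 2 w) y)) y) = fun _ => (0:ℝ) := by
      funext y
      have := heav y
      simp only
      linear_combination this
    have h0 : pd 1 (fun y => (fun y => c1 * (pd 0 (pd 2 w) y * pd 1 (pd 3 w) y)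
          - c2 * (pd 0 (pd 1 w) y * pd 2 (pd 3 w) y)) y
          - (fun y => c3 * (pd 0 (pd 3 w) y * pd 1 (pd 2 w) y)) y) x = 0 := by
      rw [hzero]
      simp [pd]
    rw [pd_sub (by fun_prop) (by fun_prop)] at h0
    rw [pd_sub (by fun_prop) (by fun_prop)] at h0
    rw [pd_const_mul (by fun_prop), pd_const_mul (by fun_prop), pd_const_mul (by fun_prop)] at h0
    rw [pd_mul (hd2 0 2) (hd2 1 3), pd_mul (hd2 0 1) (hd2 2 3), pd_mul (hd2 0 3) (hd2 1 2)] at h0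
    linarith
  -- commutation rewrites to canonical form
  have E10 : pd 1 (pd 0 w) = pd 0 (pd 1 w) := funext (pd_comm hw 1 0)
  have E21 : pd 2 (pd 1 w) = pd 1 (pd 2 w) := funext (pd_comm hw 2 1)
  have E31 : pd 3 (pd 1 w) = pd 1 (pd 3 w) := funext (pd_comm hw 3 1)
  have E20 : pd 2 (pd 0 w) = pd 0 (pd 2 w) := funext (pd_comm hw 2 0)
  have E30 : pd 3 (pd 0 w) = pd 0 (pd 3 w) := funext (pd_comm hw 3 0)
  have F23 : pd 2 (pd 1 (pd 3 w)) = pd 1 (pd 2 (pd 3 w)) :=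
    funext (pd_comm (pd_contDiff 3 hw) 2 1)
  have G01 : pd 0 (pd 1 (pd 1 w)) = pd 1 (pd 0 (pd 1 w)) :=
    funext (pd_comm (pd_contDiff 1 hw) 0 1)
  have G03 : pd 0 (pd 1 (pd 3 w)) = pd 1 (pd 0 (pd 3 w)) :=
    funext (pd_comm (pd_contDiff 3 hw) 0 1)
  have G02 : pd 0 (pd 1 (pd 2 w)) = pd 1 (pd 0 (pd 2 w)) :=
    funext (pd_comm (pd_contDiff 2 hw) 0 1)
  rw [E10, E21, E31, E20, E30, F23, G01, G03, G02]
  linear_combination (pd 1 (pd 0 (pd 1 w)) x) * heav x - (pd 0 (pd 1 w) x) * key
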